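/- arXiv:math/0603704 — 2 statements merged into one kernel-verified Lean document; each statement's English description precedes it below -/
import Mathlib

section
/- DSC locality theorem, nodal part (eq. (1.5)): Assume the DSC setup. Fix a cell ζ ∈ M and m ∈ ℕ. Let (z^p, z^n) and (z'^p, z'^n) be two DSC processes evolving under the same reflection maps R_k, the same connection maps C_k, and the same node-boundary map nb, with incident and outgoing fields z_in, z_out and z'_in, z'_out defined by the scattering recursion. If z_in,q(k) = z'_in,q(k) for all ports q ∈ ∂ζ and all k ≤ m, then z^n_q(m) = z'^n_q(m) for all q ∈ ∂ζ, and moreover z^p_q(k) = z'^p_q(k) for all q ∈ ∂ζ and all k ≤ m. In other words, the nodal state of a cell at time mτ + τ/2 is a function only of the history of fields incident on the scattering channels of that cell. -/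
/-!
The scattering recursion can be run backwards: the port state at time `k + 1` is the
incident field plus `nb` of the outgoing field, and the outgoing field is the nodal state
minus `nb` of the incident field. So on the ports of ζ the port states are determined by the
incident fields there together with the previous nodal states, which by locality of the
reflection maps are determined by the earlier port states on ζ. Induction on time closes the
loop.
-/

section

variable {V Q M : Type*}

theorem port_succ_eq_incident_add_nb_outgoing [AddCommGroup V] (nb : V → V)
    {zp zout zin : ℕ → Q → V}
    (hin : ∀ m q, zin (m + 1) q = zp (m + 1) q - nb (zout m q)) (k : ℕ) (q : Q) :
    zp (k + 1) q = zin (k + 1) q + nb (zout k q) :=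
  eq_add_of_sub_eq (hin k q).symm

theorem nodal_eq_of_port_eq_on_cell (cell : Q → M) (R : ℕ → (ℕ → Q → V) → Q → V)
    (hRloc : ∀ m q (h h' : ℕ → Q → V),
      (∀ k ≤ m, ∀ r, cell r = cell q → h k r = h' k r) → R m h q = R m h' q)
    {zp zn zp' zn' : ℕ → Q → V}
    (hzn : ∀ m q, zn m q = R m zp q) (hzn' : ∀ m q, zn' m q = R m zp' q)
    {ζ : M} {m : ℕ} (hp : ∀ k ≤ m, ∀ r, cell r = ζ → zp k r = zp' k r)
    {q : Q} (hq : cell q = ζ) :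
    zn m q = zn' m q := by
  rw [hzn, hzn']
  exact hRloc m q zp zp' fun k hk r hr => hp k hk r (hr.trans hq)

theorem port_eq_on_cell_of_incident_eq [AddCommGroup V] (nb : V → V) (cell : Q → M)
    (R : ℕ → (ℕ → Q → V) → Q → V)
    (hRloc : ∀ m q (h h' : ℕ → Q → V),
      (∀ k ≤ m, ∀ r, cell r = cell q → h k r = h' k r) → R m h q = R m h' q)
    {zp zn zin zout zp' zn' zin' zout' : ℕ → Q → V}
    (hzn : ∀ m q, zn m q = R m zp q)
    (hin0 : ∀ q, zin 0 q = zp 0 q)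
    (hout : ∀ m q, zout m q = zn m q - nb (zin m q))
    (hin : ∀ m q, zin (m + 1) q = zp (m + 1) q - nb (zout m q))
    (hzn' : ∀ m q, zn' m q = R m zp' q)
    (hin0' : ∀ q, zin' 0 q = zp' 0 q)
    (hout' : ∀ m q, zout' m q = zn' m q - nb (zin' m q))
    (hin' : ∀ m q, zin' (m + 1) q = zp' (m + 1) q - nb (zout' m q))
    {ζ : M} {m : ℕ} (hhist : ∀ q, cell q = ζ → ∀ k ≤ m, zin k q = zin' k q) :
    ∀ k ≤ m, ∀ q, cell q = ζ → zp k q = zp' k q := by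
  suffices h : ∀ n ≤ m, ∀ k ≤ n, ∀ q, cell q = ζ → zp k q = zp' k q from h m le_rfl
  intro n
  induction n with
  | zero =>
    intro _ k hk q hq
    obtain rfl := Nat.le_zero.mp hk
    rw [← hin0, ← hin0']
    exact hhist q hq 0 (Nat.zero_le m)
  | succ n ih =>
    intro hnm k hk q hq
    have hprev := ih (Nat.le_of_succ_le hnm)
    rcases Nat.le_succ_iff.mp hk with hk | rfl
    · exact hprev k hk q hq
    have hnodal : zn n q = zn' n q :=
      nodal_eq_of_port_eq_on_cell cell R hRloc hzn hzn' hprev hq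
    have hout_eq : zout n q = zout' n q := by
      rw [hout, hout', hnodal, hhist q hq n (Nat.le_of_succ_le hnm)]
    rw [port_succ_eq_incident_add_nb_outgoing nb hin,
      port_succ_eq_incident_add_nb_outgoing nb hin', hout_eq, hhist q hq (n + 1) hnm]

end

theorem dsc_locality_nodal_general
    {V : Type*} [AddCommGroup V] {Q M : Type*}
    (nb : V → V) (cell : Q → M)
    (R : ℕ → (ℕ → Q → V) → Q → V)
    -- locality of the reflection maps: the component at port q of R m depends
    -- only on the port history up to time m restricted to the ports of cell q
    (hRloc : ∀ m q (h h' : ℕ → Q → V),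
      (∀ k ≤ m, ∀ r, cell r = cell q → h k r = h' k r) → R m h q = R m h' q)
    -- first DSC process with its incident and outgoing fields
    (zp zn zin zout : ℕ → Q → V)
    (hzn : ∀ m q, zn m q = R m zp q)
    (hin0 : ∀ q, zin 0 q = zp 0 q)
    (hout : ∀ m q, zout m q = zn m q - nb (zin m q))
    (hin : ∀ m q, zin (m + 1) q = zp (m + 1) q - nb (zout m q))
    -- second DSC process with its incident and outgoing fields
    (zp' zn' zin' zout' : ℕ → Q → V)
    (hzn' : ∀ m q, zn' m q = R m zp' q)
    (hin0' : ∀ q, zin' 0 q = zp' 0 q)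
    (hout' : ∀ m q, zout' m q = zn' m q - nb (zin' m q))
    (hin' : ∀ m q, zin' (m + 1) q = zp' (m + 1) q - nb (zout' m q))
    -- a fixed cell ζ and time m, with equal incident histories on ∂ζ up to m
    (ζ : M) (m : ℕ)
    (hhist : ∀ q, cell q = ζ → ∀ k ≤ m, zin k q = zin' k q) :
    (∀ q, cell q = ζ → zn m q = zn' m q) ∧
      (∀ q, cell q = ζ → ∀ k ≤ m, zp k q = zp' k q) := by
  have hp : ∀ k ≤ m, ∀ q, cell q = ζ → zp k q = zp' k q :=
    port_eq_on_cell_of_incident_eq nb cell R hRloc hzn hin0 hout hin hzn' hin0' hout' hin' hhist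
  exact ⟨fun q hq => nodal_eq_of_port_eq_on_cell cell R hRloc hzn hzn' hp hq,
    fun q hq k hk => hp k hk q hq⟩

/-- DSC locality theorem, nodal part (eq. (1.5)): the nodal state of a cell ζ
at time mτ + τ/2 is a function only of the history of fields incident on the
scattering channels of that cell: two DSC processes evolving under the same
reflection maps `R`, connection maps `C` and node-boundary map `nb`, whose
incident fields agree on the ports of ζ up to time m, have equal nodal states
on ζ at time m (and equal port states on ζ up to time m). -/
theorem dsc_locality_nodal
    {V : Type*} [AddCommGroup V] {Q M : Type*}
    (nb : V → V) (cell : Q → M) (adj : Q → Q)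
    (hadj : ∀ q, adj (adj q) = q)
    (R C : ℕ → (ℕ → Q → V) → Q → V)
    -- locality of the reflection maps: the component at port q of R m depends
    -- only on the port history up to time m restricted to the ports of cell q
    (hRloc : ∀ m q (h h' : ℕ → Q → V),
      (∀ k ≤ m, ∀ r, cell r = cell q → h k r = h' k r) → R m h q = R m h' q)
    -- locality of the connection maps: the component at port q of C m depends
    -- only on the nodal history up to time m restricted to q and adj q
    (hCloc : ∀ m q (h h' : ℕ → Q → V),
      (∀ k ≤ m, ∀ r, (r = q ∨ r = adj q) → h k r = h' k r) → C m h q = C m h' q)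
    -- first DSC process with its incident and outgoing fields
    (zp zn zin zout : ℕ → Q → V)
    (hzn : ∀ m q, zn m q = R m zp q)
    (hzp : ∀ m q, zp (m + 1) q = C m zn q)
    (hin0 : ∀ q, zin 0 q = zp 0 q)
    (hout : ∀ m q, zout m q = zn m q - nb (zin m q))
    (hin : ∀ m q, zin (m + 1) q = zp (m + 1) q - nb (zout m q))
    -- second DSC process with its incident and outgoing fields
    (zp' zn' zin' zout' : ℕ → Q → V)
    (hzn' : ∀ m q, zn' m q = R m zp' q)
    (hzp' : ∀ m q, zp' (m + 1) q = C m zn' q)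
    (hin0' : ∀ q, zin' 0 q = zp' 0 q)
    (hout' : ∀ m q, zout' m q = zn' m q - nb (zin' m q))
    (hin' : ∀ m q, zin' (m + 1) q = zp' (m + 1) q - nb (zout' m q))
    -- a fixed cell ζ and time m, with equal incident histories on ∂ζ up to m
    (ζ : M) (m : ℕ)
    (hhist : ∀ q, cell q = ζ → ∀ k ≤ m, zin k q = zin' k q) :
    (∀ q, cell q = ζ → zn m q = zn' m q) ∧
      (∀ q, cell q = ζ → ∀ k ≤ m, zp k q = zp' k q) :=
  dsc_locality_nodal_general nb cell R hRloc zp zn zin zout hzn hin0 hout hin zp' zn' zin' zout'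
    hzn' hin0' hout' hin' ζ m hhist
end

section
/- DSC locality theorem, port part (eq. (1.6)): Assume the DSC setup. Fix a port q ∈ Q and m ∈ ℕ. Let (z^p, z^n) and (z'^p, z'^n) be two DSC processes evolving under the same reflection maps R_k, the same connection maps C_k, and the same node-boundary map nb, with incident and outgoing fields defined by the scattering recursion, and with equal initial port states z^p_r(0) = z'^p_r(0) for r ∈ {q, adj q}. If z_out,r(k) = z'_out,r(k) for all r ∈ {q, adj q} and all k ≤ m, then z^p_q(m+1) = z'^p_q(m+1), and moreover z^p_r(k) = z'^p_r(k) for all r ∈ {q, adj q} and all k ≤ m+1. In other words, the port state at time (m+1)τ is a function only of the history of outgoing nodal fields in the (at most two) cells adjacent to that port. -/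
/-!
At a single port the scattering recursion can be run backwards: the incident field at time `k`
is the port state minus `nb` of the previous outgoing field, and the nodal state is the outgoing
field plus `nb` of the incident one. So on `{q, adj q}` the nodal history up to time `k` is
determined by the port and outgoing histories up to time `k`. Since `{q, adj q}` is closed under
the involution `adj`, locality of the connection maps then propagates equality of port states on
`{q, adj q}` from time `k` to time `k + 1`, by strong induction on `k`.
-/

namespace DSC

variable {V : Type*} [AddCommGroup V]

structure IsScattering (nb : V → V) (p n i o : ℕ → V) : Prop where
  incident_zero : i 0 = p 0
  outgoing : ∀ m, o m = n m - nb (i m)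
  incident_succ : ∀ m, i (m + 1) = p (m + 1) - nb (o m)

namespace IsScattering

variable {nb : V → V} {p n i o p' n' i' o' : ℕ → V}

theorem incident_eq (h : IsScattering nb p n i o) (h' : IsScattering nb p' n' i' o') {k : ℕ}
    (hp : p k = p' k) (ho : ∀ j < k, o j = o' j) : i k = i' k := by
  cases k with
  | zero => rw [h.incident_zero, h'.incident_zero, hp]
  | succ k => rw [h.incident_succ, h'.incident_succ, hp, ho k k.lt_succ_self]

theorem nodal_eq (h : IsScattering nb p n i o) (h' : IsScattering nb p' n' i' o') {k : ℕ}
    (hp : p k = p' k) (ho : ∀ j ≤ k, o j = o' j) : n k = n' k := by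
  have hi : i k = i' k := h.incident_eq h' hp fun j hj => ho j hj.le
  rw [← sub_left_inj (a := nb (i k)), ← h.outgoing, hi, ← h'.outgoing, ho k le_rfl]

end IsScattering

end DSC

theorem Function.Involutive.eq_or_eq_of_eq_or_eq {Q : Type*} {adj : Q → Q}
    (hadj : Function.Involutive adj) {q r s : Q} (hr : r = q ∨ r = adj q)
    (hs : s = r ∨ s = adj r) : s = q ∨ s = adj q := by
  rcases hr with rfl | rfl <;> rcases hs with rfl | rfl
  exacts [.inl rfl, .inr rfl, .inr rfl, .inl (hadj _)]

theorem dsc_locality_port_general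
    {V : Type*} [AddCommGroup V] {Q : Type*}
    (nb : V → V) (adj : Q → Q)
    (hadj : ∀ q, adj (adj q) = q)
    (C : ℕ → (ℕ → Q → V) → Q → V)
    -- locality of the connection maps: the component at port q of C m depends
    -- only on the nodal history up to time m restricted to q and adj q
    (hCloc : ∀ m q (h h' : ℕ → Q → V),
      (∀ k ≤ m, ∀ r, (r = q ∨ r = adj q) → h k r = h' k r) → C m h q = C m h' q)
    -- first DSC process with its incident and outgoing fields
    (zp zn zin zout : ℕ → Q → V)
    (hzp : ∀ m q, zp (m + 1) q = C m zn q)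
    (hin0 : ∀ q, zin 0 q = zp 0 q)
    (hout : ∀ m q, zout m q = zn m q - nb (zin m q))
    (hin : ∀ m q, zin (m + 1) q = zp (m + 1) q - nb (zout m q))
    -- second DSC process with its incident and outgoing fields
    (zp' zn' zin' zout' : ℕ → Q → V)
    (hzp' : ∀ m q, zp' (m + 1) q = C m zn' q)
    (hin0' : ∀ q, zin' 0 q = zp' 0 q)
    (hout' : ∀ m q, zout' m q = zn' m q - nb (zin' m q))
    (hin' : ∀ m q, zin' (m + 1) q = zp' (m + 1) q - nb (zout' m q))
    -- a fixed port q and time m, with equal initial port states on {q, adj q}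
    -- and equal outgoing histories on {q, adj q} up to time m
    (q : Q) (m : ℕ)
    (hinit : ∀ r, (r = q ∨ r = adj q) → zp 0 r = zp' 0 r)
    (hhist : ∀ r, (r = q ∨ r = adj q) → ∀ k ≤ m, zout k r = zout' k r) :
    zp (m + 1) q = zp' (m + 1) q ∧
      (∀ r, (r = q ∨ r = adj q) → ∀ k ≤ m + 1, zp k r = zp' k r) := by
  have hscat (r : Q) : DSC.IsScattering nb (zp · r) (zn · r) (zin · r) (zout · r) :=
    ⟨hin0 r, (hout · r), (hin · r)⟩
  have hscat' (r : Q) : DSC.IsScattering nb (zp' · r) (zn' · r) (zin' · r) (zout' · r) :=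
    ⟨hin0' r, (hout' · r), (hin' · r)⟩
  have hports : ∀ k ≤ m + 1, ∀ r, (r = q ∨ r = adj q) → zp k r = zp' k r := by
    intro k
    induction k using Nat.strong_induction_on with
    | _ k ih =>
      intro hk r hr
      cases k with
      | zero => exact hinit r hr
      | succ k =>
        rw [hzp, hzp']
        refine hCloc k r zn zn' fun j hj s hs => ?_
        have hsq := Function.Involutive.eq_or_eq_of_eq_or_eq hadj hr hs
        exact (hscat s).nodal_eq (hscat' s) (ih j (by omega) (by omega) s hsq)
          fun i hi => hhist s hsq i (by omega)
  exact ⟨hports (m + 1) le_rfl q (.inl rfl), fun r hr k hk => hports k hk r hr⟩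

/-- DSC locality theorem, port part (eq. (1.6)): the port state at a port q at
time (m+1)τ is a function only of the history of outgoing nodal fields in the
(at most two) cells adjacent to that port: two DSC processes evolving under the
same reflection maps `R`, connection maps `C` and node-boundary map `nb`, with
equal initial port states on {q, adj q} and whose outgoing fields agree on
{q, adj q} up to time m, have equal port states at q at time m+1 (and equal
port states on {q, adj q} up to time m+1). -/
theorem dsc_locality_port
    {V : Type*} [AddCommGroup V] {Q M : Type*}
    (nb : V → V) (cell : Q → M) (adj : Q → Q)
    (hadj : ∀ q, adj (adj q) = q)
    (R C : ℕ → (ℕ → Q → V) → Q → V)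
    -- locality of the reflection maps: the component at port q of R m depends
    -- only on the port history up to time m restricted to the ports of cell q
    (hRloc : ∀ m q (h h' : ℕ → Q → V),
      (∀ k ≤ m, ∀ r, cell r = cell q → h k r = h' k r) → R m h q = R m h' q)
    -- locality of the connection maps: the component at port q of C m depends
    -- only on the nodal history up to time m restricted to q and adj q
    (hCloc : ∀ m q (h h' : ℕ → Q → V),
      (∀ k ≤ m, ∀ r, (r = q ∨ r = adj q) → h k r = h' k r) → C m h q = C m h' q)
    -- first DSC process with its incident and outgoing fields
    (zp zn zin zout : ℕ → Q → V)
    (hzn : ∀ m q, zn m q = R m zp q)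
    (hzp : ∀ m q, zp (m + 1) q = C m zn q)
    (hin0 : ∀ q, zin 0 q = zp 0 q)
    (hout : ∀ m q, zout m q = zn m q - nb (zin m q))
    (hin : ∀ m q, zin (m + 1) q = zp (m + 1) q - nb (zout m q))
    -- second DSC process with its incident and outgoing fields
    (zp' zn' zin' zout' : ℕ → Q → V)
    (hzn' : ∀ m q, zn' m q = R m zp' q)
    (hzp' : ∀ m q, zp' (m + 1) q = C m zn' q)
    (hin0' : ∀ q, zin' 0 q = zp' 0 q)
    (hout' : ∀ m q, zout' m q = zn' m q - nb (zin' m q))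
    (hin' : ∀ m q, zin' (m + 1) q = zp' (m + 1) q - nb (zout' m q))
    -- a fixed port q and time m, with equal initial port states on {q, adj q}
    -- and equal outgoing histories on {q, adj q} up to time m
    (q : Q) (m : ℕ)
    (hinit : ∀ r, (r = q ∨ r = adj q) → zp 0 r = zp' 0 r)
    (hhist : ∀ r, (r = q ∨ r = adj q) → ∀ k ≤ m, zout k r = zout' k r) :
    zp (m + 1) q = zp' (m + 1) q ∧
      (∀ r, (r = q ∨ r = adj q) → ∀ k ≤ m + 1, zp k r = zp' k r) :=
  dsc_locality_port_general nb adj hadj C hCloc zp zn zin zout hzp hin0 hout hin zp' zn' zin' zout'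
    hzp' hin0' hout' hin' q m hinit hhist
end
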